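/- arXiv:1807.08715 — 3 statements merged into one kernel-verified Lean document; each statement's English description precedes it below -/
import Mathlib

section
/- Let X be a real random variable that is symmetric about zero (i.e., X and -X have the same distribution) with finite nonzero second moment, and let κ > 1 be a fixed real number. Then there exists a real random variable X* whose distribution has compact support (i.e., X* is almost surely bounded), with nonzero variance, such that P(|X - E[X]| ≥ κ·σ_X) ≤ P(|X* - E[X*]| ≥ κ·σ_{X*}), where σ_X and σ_{X*} denote the standard deviations of X and X* respectively. -/
open MeasureTheory ProbabilityTheory Filter

/-!
Clip `X` to `[-A, A]` with `A = κ σ_X + 1`. Clipping is odd, so the clipped variable is again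
symmetric and both means vanish; it shrinks `|X|`, so it does not increase the variance. A
point where `|X| ≥ κ σ_X` is either left untouched or sent to `±A`, and in both cases it
remains an outlier at the smaller level `κ σ_{X*}`.
-/

def clip (A x : ℝ) : ℝ := max (-A) (min A x)

lemma clip_neg {A : ℝ} (hA : 0 ≤ A) (x : ℝ) : clip A (-x) = -clip A x := by
  simp only [clip, max_def, min_def]
  split_ifs <;> linarith

lemma abs_clip {A : ℝ} (hA : 0 ≤ A) (x : ℝ) : |clip A x| = min |x| A := by
  simp only [clip, max_def, min_def, abs_eq_max_neg]
  split_ifs <;> linarith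

lemma clip_eq_zero_iff {A : ℝ} (hA : 0 < A) {x : ℝ} : clip A x = 0 ↔ x = 0 := by
  simp only [clip, max_def, min_def]
  split_ifs <;> constructor <;> intro h <;> linarith

lemma continuous_clip (A : ℝ) : Continuous (clip A) :=
  continuous_const.max (continuous_const.min continuous_id)

section Symmetric

variable {Ω : Type*} [MeasurableSpace Ω] {μ : Measure Ω} {X : Ω → ℝ}

lemma map_comp_eq_map_neg_comp_of_odd (hX : Measurable X)
    (hsym : μ.map X = μ.map (fun ω => -X ω)) {f : ℝ → ℝ} (hf : Measurable f)
    (hodd : ∀ x, f (-x) = -f x) :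
    μ.map (fun ω => f (X ω)) = μ.map (fun ω => -f (X ω)) := by
  calc μ.map (fun ω => f (X ω)) = (μ.map X).map f := (Measure.map_map hf hX).symm
    _ = (μ.map (fun ω => -X ω)).map f := by rw [hsym]
    _ = μ.map (fun ω => -f (X ω)) := by
      rw [Measure.map_map hf (f := fun ω => -X ω) hX.neg]
      simp_rw [Function.comp_def, hodd]

lemma integral_eq_zero_of_map_eq_map_neg (hX : AEMeasurable X μ)
    (hsym : μ.map X = μ.map (fun ω => -X ω)) : μ[X] = 0 := by
  have h : μ[X] = -μ[X] :=
    calc μ[X] = ∫ x, x ∂μ.map X := (integral_map hX aestronglyMeasurable_id).symm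
      _ = ∫ x, x ∂μ.map (fun ω => -X ω) := by rw [hsym]
      _ = -μ[X] := by
        rw [integral_map (φ := fun ω => -X ω) (f := fun x => x) hX.neg aestronglyMeasurable_id,
          integral_neg]
  linarith

end Symmetric

lemma variance_le_of_abs_le_abs {Ω : Type*} [MeasurableSpace Ω] {μ : Measure Ω}
    [IsProbabilityMeasure μ] {X Y : Ω → ℝ} (hX : MemLp X 2 μ) (hμX : μ[X] = 0)
    (hY : AEStronglyMeasurable Y μ) (hYX : ∀ ω, |Y ω| ≤ |X ω|) :
    Var[Y; μ] ≤ Var[X; μ] := by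
  have hY2 : MemLp Y 2 μ := hX.of_le hY (ae_of_all _ fun ω => by simpa using hYX ω)
  calc Var[Y; μ] ≤ ∫ ω, Y ω ^ 2 ∂μ := variance_le_expectation_sq hY
    _ ≤ ∫ ω, X ω ^ 2 ∂μ :=
        integral_mono hY2.integrable_sq hX.integrable_sq fun ω => sq_le_sq.2 (hYX ω)
    _ = Var[X; μ] := (variance_of_integral_eq_zero hX.aemeasurable hμX).symm

lemma ae_eq_zero_of_variance_eq_zero {Ω : Type*} [MeasurableSpace Ω] {μ : Measure Ω}
    [IsFiniteMeasure μ] {X : Ω → ℝ} (hX : MemLp X 2 μ) (hμX : μ[X] = 0)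
    (h : Var[X; μ] = 0) : X =ᵐ[μ] 0 := by
  filter_upwards [ae_eq_integral_of_variance_eq_zero hX h] with ω hω
  simpa [hμX] using hω

/-- If `X` is a real random variable symmetric about zero with finite
nonzero second moment and `κ > 1`, then there exists an almost surely bounded
(compactly supported) random variable `X*` with nonzero variance whose outlier
probability at level `κ` is at least that of `X`. -/
theorem outlier_prob_le_of_compact_support
    {Ω : Type*} [MeasureSpace Ω] [IsProbabilityMeasure (ℙ : Measure Ω)]
    (X : Ω → ℝ) (hXmeas : Measurable X)
    (hsym : Measure.map X ℙ = Measure.map (fun ω => -X ω) ℙ)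
    (hX2 : MemLp X 2 ℙ) (hX2ne : ∫ ω, (X ω) ^ 2 ∂ℙ ≠ 0)
    (κ : ℝ) (hκ : 1 < κ) :
    ∃ Xs : Ω → ℝ, Measurable Xs ∧ (∃ C : ℝ, ∀ᵐ ω ∂ℙ, |Xs ω| ≤ C) ∧
      variance Xs ℙ ≠ 0 ∧
      ℙ {ω | κ * Real.sqrt (variance X ℙ) ≤ |X ω - ∫ ω', X ω' ∂ℙ|} ≤
        ℙ {ω | κ * Real.sqrt (variance Xs ℙ) ≤ |Xs ω - ∫ ω', Xs ω' ∂ℙ|} := by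
  have hκ0 : 0 ≤ κ := by linarith
  set A := κ * Real.sqrt (variance X ℙ) + 1
  have hA : 0 < A := by positivity
  set Xs := fun ω => clip A (X ω)
  have hXs : Measurable Xs := (continuous_clip A).measurable.comp hXmeas
  have hmean : ∫ ω, X ω ∂ℙ = 0 :=
    integral_eq_zero_of_map_eq_map_neg hXmeas.aemeasurable hsym
  have hmean_s : ∫ ω, Xs ω ∂ℙ = 0 := integral_eq_zero_of_map_eq_map_neg hXs.aemeasurable
    (map_comp_eq_map_neg_comp_of_odd hXmeas hsym (continuous_clip A).measurable (clip_neg hA.le))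
  have hXs_le : ∀ ω, |Xs ω| ≤ A := fun ω => (abs_clip hA.le _).trans_le (min_le_right _ _)
  have hXs2 : MemLp Xs 2 ℙ :=
    .of_bound hXs.aestronglyMeasurable A (ae_of_all _ fun ω => by simpa using hXs_le ω)
  have hvar_le : variance Xs ℙ ≤ variance X ℙ :=
    variance_le_of_abs_le_abs hX2 hmean hXs.aestronglyMeasurable
      fun ω => (abs_clip hA.le _).trans_le (min_le_left _ _)
  have hvar_ne : variance Xs ℙ ≠ 0 := fun h => hX2ne <| integral_eq_zero_of_ae <| by
    filter_upwards [ae_eq_zero_of_variance_eq_zero hXs2 hmean_s h] with ω hω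
    simp [(clip_eq_zero_iff hA).1 hω]
  refine ⟨Xs, hXs, ⟨A, ae_of_all _ hXs_le⟩, hvar_ne, measure_mono fun ω hω => ?_⟩
  have hσ : κ * Real.sqrt (variance Xs ℙ) ≤ κ * Real.sqrt (variance X ℙ) := by gcongr
  simp only [Set.mem_ofPred_eq, hmean, hmean_s, sub_zero] at hω ⊢
  rw [abs_clip hA.le]
  exact le_min (hσ.trans hω) (by linarith)
end

section
/- Let X₁, X₂, … be a sequence of independent identically distributed real random variables with E|X₁| < ∞ and E[X₁²] = ∞, and let k > 0 be fixed. Let x̄_n = (1/n)·Σ_{j=1}^{n} X_j and s_n² = (1/n)·Σ_{j=1}^{n}(X_j - x̄_n)². Then p_n = P(|X₁ - x̄_n| > k·s_n) tends to 0 as n → ∞. -/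
/-!
By the strong law of large numbers `x̄_n → E X₁` almost surely. Applied to the truncations
`min (X_j²) m`, whose means increase to `E X₁² = ∞`, it also gives `(1/n) ∑ X_j² → ∞` almost
surely, so `s_n² = (1/n) ∑ X_j² - x̄_n² → ∞` while `|X₁ - x̄_n|` stays bounded. Hence almost
surely `X₁` is eventually within `k s_n` of `x̄_n`, and almost sure convergence of the
indicators gives `p_n → 0`.
-/

open MeasureTheory ProbabilityTheory Filter Finset Function

noncomputable def empiricalMean (x : ℕ → ℝ) (n : ℕ) : ℝ :=
  (1 / (n : ℝ)) * ∑ i ∈ range n, x i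

noncomputable def empiricalVariance (x : ℕ → ℝ) (n : ℕ) : ℝ :=
  (1 / (n : ℝ)) * ∑ j ∈ range n, (x j - empiricalMean x n) ^ 2

lemma empiricalVariance_eq (x : ℕ → ℝ) (n : ℕ) :
    empiricalVariance x n = (∑ j ∈ range n, x j ^ 2) / n - empiricalMean x n ^ 2 := by
  rcases n.eq_zero_or_pos with rfl | hn
  · simp [empiricalVariance, empiricalMean]
  · simp only [empiricalVariance, empiricalMean, sub_sq, sum_add_distrib, sum_sub_distrib,
      ← sum_mul, ← mul_sum, sum_const, card_range, nsmul_eq_mul]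
    field_simp
    ring

lemma tendsto_empiricalVariance_atTop {x : ℕ → ℝ} {μ : ℝ}
    (hmean : Tendsto (empiricalMean x) atTop (nhds μ))
    (hsq : Tendsto (fun n : ℕ => (∑ j ∈ range n, x j ^ 2) / n) atTop atTop) :
    Tendsto (empiricalVariance x) atTop atTop := by
  refine (hsq.atTop_add (hmean.pow 2).neg).congr fun n => ?_
  rw [empiricalVariance_eq, sub_eq_add_neg]

lemma eventually_abs_sub_empiricalMean_le {x : ℕ → ℝ} {μ : ℝ} (c : ℝ) {k : ℝ} (hk : 0 < k)
    (hmean : Tendsto (empiricalMean x) atTop (nhds μ))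
    (hvar : Tendsto (empiricalVariance x) atTop atTop) :
    ∀ᶠ n in atTop, |c - empiricalMean x n| ≤ k * √(empiricalVariance x n) := by
  have hdev : Tendsto (fun n => |c - empiricalMean x n|) atTop (nhds |c - μ|) :=
    (tendsto_const_nhds.sub hmean).abs
  have hspread : Tendsto (fun n => k * √(empiricalVariance x n)) atTop atTop :=
    (Real.tendsto_sqrt_atTop.comp hvar).const_mul_atTop hk
  filter_upwards [hdev.eventually (eventually_lt_nhds (lt_add_one _)),
    hspread.eventually_ge_atTop (|c - μ| + 1)] with n hn_dev hn_spread
  exact hn_dev.le.trans hn_spread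

section Truncation

variable {Ω : Type*} {m : MeasurableSpace Ω} {μ : Measure Ω}

lemma integrable_min_const_of_nonneg [IsFiniteMeasure μ] {f : Ω → ℝ} (hf : AEMeasurable f μ)
    (hf0 : 0 ≤ᵐ[μ] f) (c : ℝ) : Integrable (fun ω => min (f ω) c) μ := by
  refine (integrable_const |c|).mono' (hf.min aemeasurable_const).aestronglyMeasurable ?_
  filter_upwards [hf0] with ω (hω : 0 ≤ f ω)
  rw [Real.norm_eq_abs, abs_le]
  exact ⟨le_min (by linarith [abs_nonneg c]) (neg_abs_le c),
    (min_le_right _ _).trans (le_abs_self c)⟩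

lemma tendsto_integral_min_atTop_of_not_integrable [IsFiniteMeasure μ] {f : Ω → ℝ}
    (hf : AEMeasurable f μ) (hf0 : 0 ≤ᵐ[μ] f) (hfi : ¬ Integrable f μ) :
    Tendsto (fun m : ℕ => ∫ ω, min (f ω) m ∂μ) atTop atTop := by
  have hlint : ∫⁻ ω, ENNReal.ofReal (f ω) ∂μ = ⊤ := by
    contrapose! hfi
    exact ⟨hf.aestronglyMeasurable, (hasFiniteIntegral_iff_ofReal hf0).2 hfi.lt_top⟩
  have hmin0 (m : ℕ) : 0 ≤ᵐ[μ] fun ω => min (f ω) m :=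
    hf0.mono fun ω hω => le_min hω m.cast_nonneg
  rw [← ENNReal.tendsto_ofReal_nhds_top, ← hlint]
  simp_rw [ofReal_integral_eq_lintegral_ofReal (integrable_min_const_of_nonneg hf hf0 _) (hmin0 _)]
  refine lintegral_tendsto_of_tendsto_of_monotone
    (fun m => (hf.min aemeasurable_const).ennreal_ofReal)
    (ae_of_all _ fun ω m m' hmm' =>
      ENNReal.ofReal_le_ofReal (min_le_min_left _ (by exact_mod_cast hmm')))
    (ae_of_all _ fun ω => tendsto_const_nhds.congr' ?_)
  filter_upwards [eventually_ge_atTop ⌈f ω⌉₊] with m hm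
  rw [min_eq_left ((Nat.le_ceil _).trans (by exact_mod_cast hm))]

theorem strong_law_ae_real_atTop_of_not_integrable [IsProbabilityMeasure μ] (Y : ℕ → Ω → ℝ)
    (hY0 : 0 ≤ᵐ[μ] Y 0) (hnint : ¬ Integrable (Y 0) μ)
    (hindep : Pairwise ((· ⟂ᵢ[μ] ·) on Y)) (hident : ∀ i, IdentDistrib (Y i) (Y 0) μ μ) :
    ∀ᵐ ω ∂μ, Tendsto (fun n : ℕ => (∑ i ∈ range n, Y i ω) / n) atTop atTop := by
  have hY0_meas : AEMeasurable (Y 0) μ := (hident 0).aemeasurable_fst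
  have htrunc (m : ℕ) : Measurable fun y : ℝ => min y m := measurable_id.min measurable_const
  have hslln (m : ℕ) : ∀ᵐ ω ∂μ, Tendsto (fun n : ℕ => (∑ i ∈ range n, min (Y i ω) m) / n)
      atTop (nhds (∫ ω, min (Y 0 ω) m ∂μ)) :=
    strong_law_ae_real (fun i ω => min (Y i ω) m) (integrable_min_const_of_nonneg hY0_meas hY0 _)
      (fun i j hij => (hindep hij).comp (htrunc m) (htrunc m)) fun i => (hident i).comp (htrunc m)
  have hlevels := tendsto_integral_min_atTop_of_not_integrable hY0_meas hY0 hnint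
  filter_upwards [ae_all_iff.2 hslln] with ω hω
  refine tendsto_atTop.2 fun C => ?_
  obtain ⟨m, hm⟩ := (hlevels.eventually_gt_atTop C).exists
  filter_upwards [(hω m).eventually (eventually_gt_nhds hm)] with n hn
  have htrunc_le : ∑ i ∈ range n, min (Y i ω) m ≤ ∑ i ∈ range n, Y i ω :=
    sum_le_sum fun i _ => min_le_left _ _
  exact hn.le.trans (div_le_div_of_nonneg_right htrunc_le n.cast_nonneg)

end Truncation

lemma tendsto_measure_zero_of_ae_eventually_notMem {α ι : Type*} {m : MeasurableSpace α}
    {μ : Measure α} [IsFiniteMeasure μ] {L : Filter ι} [L.IsCountablyGenerated] {A : ι → Set α}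
    (hA : ∀ i, MeasurableSet (A i)) (h : ∀ᵐ x ∂μ, ∀ᶠ i in L, x ∉ A i) :
    Tendsto (fun i => μ (A i)) L (nhds 0) := by
  simpa using tendsto_measure_of_ae_tendsto_indicator_of_isFiniteMeasure L MeasurableSet.empty hA
    (by simpa using h)

/-- (Theorem 1 of the paper, integrable case.) For an i.i.d. sequence
of integrable real random variables with infinite second moment and any fixed `k > 0`,
the probability `p_n = P(|X₁ - x̄_n| > k·s_n)` tends to `0` as `n → ∞`, where `x̄_n`
and `s_n²` are the empirical mean and empirical variance. -/
theorem no_outliers_of_infinite_variance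
    {Ω : Type*} [MeasureSpace Ω] [IsProbabilityMeasure (ℙ : Measure Ω)]
    (X : ℕ → Ω → ℝ) (hXmeas : ∀ i, Measurable (X i))
    (hindep : iIndepFun X ℙ)
    (hident : ∀ i, IdentDistrib (X i) (X 0) ℙ ℙ)
    (hint : Integrable (X 0) ℙ)
    (hinf : ¬ Integrable (fun ω => (X 0 ω) ^ 2) ℙ)
    (k : ℝ) (hk : 0 < k) :
    Tendsto
      (fun n : ℕ => ℙ {ω | k * Real.sqrt ((1 / (n : ℝ)) * ∑ j ∈ Finset.range n,
          (X j ω - (1 / (n : ℝ)) * ∑ i ∈ Finset.range n, X i ω) ^ 2)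
        < |X 0 ω - (1 / (n : ℝ)) * ∑ i ∈ Finset.range n, X i ω|})
      atTop (nhds 0) := by
  have hsq : Measurable fun x : ℝ => x ^ 2 := measurable_id.pow_const 2
  have hmean : ∀ᵐ ω ∂ℙ, Tendsto (empiricalMean (X · ω)) atTop (nhds (∫ ω, X 0 ω ∂ℙ)) :=
    (strong_law_ae_real X hint (fun i j hij => hindep.indepFun hij) hident).mono
      fun ω h => h.congr fun n => (one_div_mul_eq_div _ _).symm
  have hsquares := strong_law_ae_real_atTop_of_not_integrable (fun i ω => X i ω ^ 2)
    (ae_of_all _ fun ω => sq_nonneg _) hinf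
    (fun i j hij => (hindep.indepFun hij).comp hsq hsq) fun i => (hident i).comp hsq
  refine tendsto_measure_zero_of_ae_eventually_notMem (fun n => measurableSet_lt ?_ ?_) ?_
  · fun_prop
  · fun_prop
  filter_upwards [hmean, hsquares] with ω hω_mean hω_sq
  filter_upwards [eventually_abs_sub_empiricalMean_le (X 0 ω) hk hω_mean
    (tendsto_empiricalVariance_atTop hω_mean hω_sq)] with n hn
  exact not_lt.2 hn
end

section
/- Let X be a real random variable with E[X] = 0 and finite nonzero variance σ², and let κ > 1. Suppose P(|X| ≥ κ·σ) ≥ 1/κ². Then X takes values in the three-point set {-κσ, 0, κσ} almost surely, with P(X = κσ) = P(X = -κσ) = 1/(2κ²) and P(X = 0) = 1 - 1/κ². In particular, the distribution with maximal outlier probability at level κ among all finite-variance distributions is unique up to location and scale. -/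
open MeasureTheory ProbabilityTheory Filter

/-! Chebyshev's inequality gives `P(|X| ≥ κσ) ≤ 1/κ²`, so the hypothesis forces equality, which
is equality in Markov's inequality for `X²` at level `(κσ)²`. Hence `X²` is a.e. `(κσ)²` times
the indicator of `{|X| ≥ κσ}`, i.e. `X ∈ {-κσ, 0, κσ}` a.s.; the mean-zero condition then splits
the mass `1/κ²` evenly between `±κσ`. -/

section

variable {Ω : Type*} {m : MeasurableSpace Ω} {μ : Measure Ω}

/-- The equality case of Markov's inequality `mul_meas_ge_le_integral_of_nonneg`. -/
theorem ae_eq_zero_or_eq_of_integral_le_mul_measureReal_ge [IsFiniteMeasure μ] {f : Ω → ℝ}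
    (hf_nonneg : 0 ≤ᵐ[μ] f) (hf_int : Integrable f μ) {c : ℝ}
    (h : ∫ ω, f ω ∂μ ≤ c * μ.real {ω | c ≤ f ω}) :
    ∀ᵐ ω ∂μ, f ω = 0 ∨ f ω = c := by
  set S := {ω | c ≤ f ω}
  have hS : NullMeasurableSet S μ := hf_int.aemeasurable.nullMeasurable measurableSet_Ici
  have hg_int : Integrable (S.indicator fun _ ↦ c) μ := (integrable_const c).indicator₀ hS
  have hg_le : S.indicator (fun _ ↦ c) ≤ᵐ[μ] f := by
    filter_upwards [hf_nonneg] with ω hω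
    by_cases hωS : ω ∈ S
    · rw [Set.indicator_of_mem hωS]
      exact hωS
    · rw [Set.indicator_of_notMem hωS]
      exact hω
  have hg_integral : ∫ ω, S.indicator (fun _ ↦ c) ω ∂μ = ∫ ω, f ω ∂μ := by
    refine le_antisymm (integral_mono_ae hg_int hf_int hg_le) ?_
    rwa [integral_indicator₀ hS, setIntegral_const, smul_eq_mul, mul_comm]
  filter_upwards [(integral_eq_iff_of_ae_le hg_int hf_int hg_le).1 hg_integral] with ω hω
  by_cases hωS : ω ∈ S <;> simp_all

theorem ae_eq_neg_or_eq_zero_or_eq_of_integral_sq_le [IsFiniteMeasure μ] {X : Ω → ℝ}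
    (hX : MemLp X 2 μ) {a : ℝ} (ha : 0 ≤ a) (h : ∫ ω, X ω ^ 2 ∂μ ≤ a ^ 2 * μ.real {ω | a ≤ |X ω|}) :
    ∀ᵐ ω ∂μ, X ω = -a ∨ X ω = 0 ∨ X ω = a := by
  have hS : {ω | a ≤ |X ω|} = {ω | a ^ 2 ≤ X ω ^ 2} := by
    ext ω
    simp [sq_le_sq, abs_of_nonneg ha]
  rw [hS] at h
  filter_upwards [ae_eq_zero_or_eq_of_integral_le_mul_measureReal_ge
    (ae_of_all _ fun ω ↦ sq_nonneg (X ω)) hX.integrable_sq h] with ω hω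
  rcases hω with h0 | ha2
  · exact Or.inr (Or.inl ((pow_eq_zero_iff two_ne_zero).1 h0))
  · rcases sq_eq_sq_iff_eq_or_eq_neg.1 ha2 with h | h
    · exact Or.inr (Or.inr h)
    · exact Or.inl h

variable {X : Ω → ℝ} {a : ℝ}

theorem measure_abs_ge_eq_measure_eq_add_measure_eq_neg (hXm : Measurable X) (ha : 0 < a)
    (hX : ∀ᵐ ω ∂μ, X ω = -a ∨ X ω = 0 ∨ X ω = a) :
    μ {ω | a ≤ |X ω|} = μ {ω | X ω = a} + μ {ω | X ω = -a} := by
  have hdisj : Disjoint {ω | X ω = a} {ω | X ω = -a} :=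
    Set.disjoint_left.2 fun ω h₁ h₂ ↦ by simp only [Set.mem_ofPred_eq] at h₁ h₂; linarith
  rw [← measure_union hdisj (hXm (measurableSet_singleton _))]
  refine measure_congr (eventuallyEq_set.2 ?_)
  filter_upwards [hX] with ω hω
  rcases hω with h | h | h <;> simp [h, abs_of_pos ha, ha.ne, ha.ne', ha.not_ge]

theorem measure_eq_zero_eq_one_sub_measure_abs_ge [IsProbabilityMeasure μ] (hXm : Measurable X)
    (ha : 0 < a) (hX : ∀ᵐ ω ∂μ, X ω = -a ∨ X ω = 0 ∨ X ω = a) :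
    μ {ω | X ω = 0} = 1 - μ {ω | a ≤ |X ω|} := by
  rw [← prob_compl_eq_one_sub (measurableSet_le measurable_const hXm.abs)]
  refine measure_congr (eventuallyEq_set.2 ?_)
  filter_upwards [hX] with ω hω
  rcases hω with h | h | h <;> simp [h, abs_of_pos ha, ha.ne', ha.not_ge]

theorem measure_eq_eq_measure_eq_neg [IsFiniteMeasure μ] (hXm : Measurable X) (ha : a ≠ 0)
    (hX : ∀ᵐ ω ∂μ, X ω = -a ∨ X ω = 0 ∨ X ω = a) (hmean : ∫ ω, X ω ∂μ = 0) :
    μ {ω | X ω = a} = μ {ω | X ω = -a} := by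
  set A := {ω | X ω = a}
  set B := {ω | X ω = -a}
  have hA : MeasurableSet A := hXm (measurableSet_singleton _)
  have hB : MeasurableSet B := hXm (measurableSet_singleton _)
  have hX_eq : X =ᵐ[μ] fun ω ↦ A.indicator (fun _ ↦ a) ω + B.indicator (fun _ ↦ -a) ω := by
    filter_upwards [hX] with ω hω
    rcases hω with h | h | h <;> simp [A, B, h, ha, ha.symm, self_eq_neg, neg_eq_self]
  have hintegral : ∫ ω, X ω ∂μ = a * (μ.real A - μ.real B) := by
    rw [integral_congr_ae hX_eq, integral_add ((integrable_const _).indicator hA)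
      ((integrable_const _).indicator hB), integral_indicator_const _ hA,
      integral_indicator_const _ hB, smul_eq_mul, smul_eq_mul]
    ring
  rw [hmean, eq_comm, mul_eq_zero, sub_eq_zero] at hintegral
  exact (measureReal_eq_measureReal_iff).1 (hintegral.resolve_left ha)

end

/-- (Uniqueness of the extremal distribution, via Selberg's inequality.)
If `X` is centered with finite nonzero variance `σ²`, `κ > 1`, and
`P(|X| ≥ κ·σ) ≥ 1/κ²`, then `X` is almost surely concentrated on `{-κσ, 0, κσ}`
with `P(X = κσ) = P(X = -κσ) = 1/(2κ²)` and `P(X = 0) = 1 - 1/κ²`. -/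
theorem extremal_outlier_distribution_unique
    {Ω : Type*} [MeasureSpace Ω] [IsProbabilityMeasure (ℙ : Measure Ω)]
    (X : Ω → ℝ) (hXmeas : Measurable X) (hX2 : MemLp X 2 ℙ)
    (hmean : ∫ ω, X ω ∂ℙ = 0) (hvar : variance X ℙ ≠ 0)
    (κ : ℝ) (hκ : 1 < κ)
    (hout : ENNReal.ofReal (1 / κ ^ 2)
      ≤ ℙ {ω | κ * Real.sqrt (variance X ℙ) ≤ |X ω|}) :
    (∀ᵐ ω ∂ℙ, X ω = -(κ * Real.sqrt (variance X ℙ)) ∨ X ω = 0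
        ∨ X ω = κ * Real.sqrt (variance X ℙ)) ∧
    ℙ {ω | X ω = κ * Real.sqrt (variance X ℙ)} = ENNReal.ofReal (1 / (2 * κ ^ 2)) ∧
    ℙ {ω | X ω = -(κ * Real.sqrt (variance X ℙ))} = ENNReal.ofReal (1 / (2 * κ ^ 2)) ∧
    ℙ {ω | X ω = 0} = ENNReal.ofReal (1 - 1 / κ ^ 2) := by
  set σ := Real.sqrt (variance X ℙ)
  have ha : 0 < κ * σ :=
    mul_pos (zero_lt_one.trans hκ) (Real.sqrt_pos.2 ((variance_nonneg X ℙ).lt_of_ne' hvar))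
  have hvar_eq : variance X ℙ = (κ * σ) ^ 2 * (1 / κ ^ 2) := by
    rw [mul_pow, Real.sq_sqrt (variance_nonneg X ℙ)]
    field_simp
  have hS : ℙ {ω | κ * σ ≤ |X ω|} = ENNReal.ofReal (1 / κ ^ 2) := by
    refine le_antisymm ?_ hout
    have hcheb := meas_ge_le_variance_div_sq hX2 ha
    rw [hmean, hvar_eq, mul_div_cancel_left₀ _ (pow_ne_zero 2 ha.ne')] at hcheb
    simpa only [sub_zero] using hcheb
  have htri := ae_eq_neg_or_eq_zero_or_eq_of_integral_sq_le hX2 ha.le <| by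
    rw [← variance_of_integral_eq_zero hX2.aemeasurable hmean, measureReal_def, hS,
      ENNReal.toReal_ofReal (by positivity), hvar_eq]
  have hsym := measure_eq_eq_measure_eq_neg hXmeas ha.ne' htri hmean
  have hhalf : ℙ {ω | X ω = κ * σ} = ENNReal.ofReal (1 / (2 * κ ^ 2)) := by
    rw [mul_comm 2, ← div_div, ENNReal.ofReal_div_of_pos two_pos, ← hS,
      measure_abs_ge_eq_measure_eq_add_measure_eq_neg hXmeas ha htri, ← hsym, ← two_mul,
      ENNReal.ofReal_ofNat]
    exact (ENNReal.eq_div_iff two_ne_zero ENNReal.ofNat_ne_top).2 rfl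
  refine ⟨htri, hhalf, hsym ▸ hhalf, ?_⟩
  rw [measure_eq_zero_eq_one_sub_measure_abs_ge hXmeas ha htri, hS, ← ENNReal.ofReal_one,
    ← ENNReal.ofReal_sub _ (by positivity)]
end
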